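/- Let G : ℝ → ℝ be a continuous, strictly increasing bijection of ℝ onto ℝ, let b̃ : ℝ → ℝ be continuous and one-sided Lipschitz with constant L > 0, and let h ∈ (0, 1/L). Then for every a ∈ ℝ there exists a unique x ∈ ℝ such that G(x) − h·b̃(G(x)) = a. In particular, given any x₀, s ∈ ℝ, there is a unique x₁ ∈ ℝ with G(x₁) = G(x₀) + h·b̃(G(x₁)) + s, so each step of the transformed semi-implicit Euler–Maruyama recursion is well-defined. -/

import Mathlib

/-!
The map `F u = u - h * b̃ u` is strongly increasing: for `y ≤ x` the one-sided Lipschitz bound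
gives `F x - F y ≥ (1 - h L) (x - y)` with `1 - h L > 0`. Hence `F` is injective and, being
continuous and growing at least linearly in both directions, onto `ℝ`. The equation is
`F (G x) = a`, and `G` is a bijection.
-/

open Filter

lemma sub_le_mul_sub_of_oneSidedLipschitz {b : ℝ → ℝ} {L : ℝ}
    (hb : ∀ x y : ℝ, (x - y) * (b x - b y) ≤ L * (x - y) ^ 2) {x y : ℝ} (hxy : y ≤ x) :
    b x - b y ≤ L * (x - y) := by
  rcases hxy.eq_or_lt with rfl | hlt
  · simp
  · refine le_of_mul_le_mul_left ?_ (sub_pos.mpr hlt)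
    linarith [hb x y]

lemma bijective_of_mul_sub_le_sub {f : ℝ → ℝ} (hf : Continuous f) {c : ℝ} (hc : 0 < c)
    (hgrowth : ∀ x y : ℝ, y ≤ x → c * (x - y) ≤ f x - f y) : Function.Bijective f := by
  have hmono : StrictMono f := fun y x hlt => by
    nlinarith [hgrowth x y hlt.le, mul_pos hc (sub_pos.mpr hlt)]
  have hlin : Tendsto (fun x => f 0 + c * x) atTop atTop :=
    tendsto_atTop_add_const_left _ _ (tendsto_id.const_mul_atTop hc)
  have hlin' : Tendsto (fun x => f 0 + c * x) atBot atBot :=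
    tendsto_atBot_add_const_left _ _ (tendsto_id.const_mul_atBot hc)
  refine ⟨hmono.injective, hf.surjective ?_ ?_⟩
  · refine tendsto_atTop_mono' _ ?_ hlin
    filter_upwards [eventually_ge_atTop 0] with x hx
    linarith [hgrowth x 0 hx]
  · refine tendsto_atBot_mono' _ ?_ hlin'
    filter_upwards [eventually_le_atBot 0] with x hx
    linarith [hgrowth 0 x hx]

lemma bijective_sub_mul_of_oneSidedLipschitz {b : ℝ → ℝ} (hb : Continuous b) {L : ℝ}
    (hosl : ∀ x y : ℝ, (x - y) * (b x - b y) ≤ L * (x - y) ^ 2) {h : ℝ} (hh : 0 ≤ h)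
    (hhL : h * L < 1) : Function.Bijective fun u => u - h * b u := by
  refine bijective_of_mul_sub_le_sub (continuous_id.sub (continuous_const.mul hb))
    (sub_pos.mpr hhL) fun x y hxy => ?_
  have := mul_le_mul_of_nonneg_left (sub_le_mul_sub_of_oneSidedLipschitz hosl hxy) hh
  linarith

theorem stmt_2 (G : ℝ → ℝ)
    (hGbij : Function.Bijective G)
    (btilde : ℝ → ℝ) (hbcont : Continuous btilde) (L : ℝ) (hL : 0 < L)
    (hosl : ∀ x y : ℝ, (x - y) * (btilde x - btilde y) ≤ L * (x - y) ^ 2)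
    (h : ℝ) (hh : h ∈ Set.Ioo 0 (1 / L)) :
    (∀ a : ℝ, ∃! x : ℝ, G x - h * btilde (G x) = a) ∧
    (∀ x₀ s : ℝ, ∃! x₁ : ℝ, G x₁ = G x₀ + h * btilde (G x₁) + s) := by
  obtain ⟨hh0, hh1⟩ := hh
  have hhL : h * L < 1 := (lt_div_iff₀ hL).mp hh1
  have hbij : Function.Bijective fun x => G x - h * btilde (G x) :=
    (bijective_sub_mul_of_oneSidedLipschitz hbcont hosl hh0.le hhL).comp hGbij
  refine ⟨hbij.existsUnique, fun x₀ s => ?_⟩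
  refine (existsUnique_congr fun x₁ => ?_).mp (hbij.existsUnique (G x₀ + s))
  constructor <;> intro _ <;> linarith
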